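/- Let α ∈ (0,2), α ≠ 1, and p ∈ (1,∞). The constant κ_{d,p,α} := -(π^{(d-1)/2}·Γ((1+α)/2)/Γ((α+d)/2))·(B((α-1)/p + 1, -α) + B(α - (α-1)/p, -α) + 1/α) is nonnegative. -/

import Mathlib

open Real MeasureTheory Set intervalIntegral

noncomputable def Bet (x y : ℝ) : ℝ := Real.Gamma x * Real.Gamma y / Real.Gamma (x + y)

noncomputable def kappa (d : ℕ) (p α : ℝ) : ℝ :=
  -(Real.pi ^ (((d : ℝ) - 1) / 2) * Real.Gamma ((1 + α) / 2) / Real.Gamma ((α + d) / 2)) *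
    (Bet ((α - 1) / p + 1) (-α) + Bet (α - (α - 1) / p) (-α) + 1 / α)


lemma gamma_ne_zero_of_gt_neg_one {x : ℝ} (h1 : -1 < x) (h0 : x ≠ 0) : Real.Gamma x ≠ 0 := by
  apply Real.Gamma_ne_zero
  intro m
  cases m with
  | zero => simpa using h0
  | succ n =>
    intro h
    have hn : (0:ℝ) ≤ (n:ℝ) := Nat.cast_nonneg n
    rw [h] at h1
    push_cast at h1
    linarith

lemma rpow_sub_one_bound {e t : ℝ} (he1 : -1 < e) (he2 : e ≤ 1) (ht0 : 0 < t) (ht1 : t < 1) :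
    |t ^ e - 1| ≤ t ^ (min e 0) * (1 - t) := by
  rcases le_or_gt e 0 with he | he
  · rw [min_eq_left he]
    have h1 : 1 ≤ t ^ e := Real.one_le_rpow_of_pos_of_le_one_of_nonpos ht0 ht1.le he
    have h4 : t ^ (e + 1) = t ^ e * t := Real.rpow_add_one ht0.ne' e
    have h3 : t ^ (e + 1) ≤ 1 := Real.rpow_le_one ht0.le ht1.le (by linarith)
    rw [abs_of_nonneg (by linarith)]
    nlinarith
  · rw [min_eq_right he.le, Real.rpow_zero, one_mul]
    have h1 : t ^ e ≤ 1 := Real.rpow_le_one ht0.le ht1.le he.le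
    have h2 : t ^ (1:ℝ) ≤ t ^ e := Real.rpow_le_rpow_of_exponent_ge ht0 ht1.le he2
    rw [Real.rpow_one] at h2
    rw [abs_of_nonpos (by linarith)]
    linarith

lemma rpow_sub_one_bound' {e t : ℝ} (he1 : -1 ≤ e) (he2 : e ≤ 2) (ht0 : 1/2 ≤ t) (ht1 : t ≤ 1) :
    |t ^ e - 1| ≤ 4 * (1 - t) := by
  have ht0' : (0:ℝ) < t := by linarith
  rcases le_or_gt e 0 with he | he
  · have h1 : 1 ≤ t ^ e := Real.one_le_rpow_of_pos_of_le_one_of_nonpos ht0' ht1 he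
    have h2 : t ^ e ≤ t ^ (-1:ℝ) := Real.rpow_le_rpow_of_exponent_ge ht0' ht1 he1
    rw [Real.rpow_neg_one] at h2
    have h3 : t * t⁻¹ = 1 := mul_inv_cancel₀ ht0'.ne'
    rw [abs_of_nonneg (by linarith)]
    nlinarith
  · have h1 : t ^ e ≤ 1 := Real.rpow_le_one ht0'.le ht1 he.le
    have h2 : t ^ (2:ℝ) ≤ t ^ e := Real.rpow_le_rpow_of_exponent_ge ht0' ht1 he2
    have h3 : t ^ (2:ℝ) = t * t := by
      rw [show (2:ℝ) = ((2:ℕ):ℝ) by norm_num, Real.rpow_natCast]; ring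
    rw [h3] at h2
    rw [abs_of_nonpos (by linarith)]
    nlinarith

lemma intervalIntegrable_beta {s q : ℝ} (hs : -1 < s) (hq : -1 < q) :
    IntervalIntegrable (fun t : ℝ => t ^ s * (1 - t) ^ q) volume 0 1 := by
  have h1 : IntervalIntegrable (fun t : ℝ => t ^ s * (1 - t) ^ q) volume 0 (1/2) := by
    apply (intervalIntegrable_rpow' hs).mul_continuousOn
    intro x hx
    rw [uIcc_of_le (by norm_num : (0:ℝ) ≤ 1/2)] at hx
    have hx1 : (1:ℝ) - x ≠ 0 := by have := hx.2; intro h; linarith [hx.1]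
    exact (ContinuousAt.rpow_const (by fun_prop) (Or.inl hx1)).continuousWithinAt
  have h2 : IntervalIntegrable (fun t : ℝ => t ^ s * (1 - t) ^ q) volume (1/2) 1 := by
    have base : IntervalIntegrable (fun u : ℝ => u ^ q) volume 0 (1/2) :=
      intervalIntegrable_rpow' hq
    have comp : IntervalIntegrable (fun x : ℝ => (1 - x) ^ q) volume (1/2) 1 := by
      have := (base.comp_sub_left 1).symm
      norm_num at this
      exact this
    apply comp.continuousOn_mul
    intro x hx
    rw [uIcc_of_le (by norm_num : (1:ℝ)/2 ≤ 1)] at hx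
    have hx0 : x ≠ 0 := by have := hx.1; intro h; rw [h] at this; norm_num at this
    exact (ContinuousAt.rpow_const (by fun_prop) (Or.inl hx0)).continuousWithinAt
  exact h1.trans h2

lemma beta_eq {a b : ℝ} (ha : 0 < a) (hb : 0 < b) :
    ∫ t in (0:ℝ)..1, t ^ (a-1) * (1 - t) ^ (b-1) = Gamma a * Gamma b / Gamma (a+b) := by
  have h := Complex.Gamma_mul_Gamma_eq_betaIntegral (s := (a:ℂ)) (t := (b:ℂ))
    (by simpa using ha) (by simpa using hb)
  have h2 : Complex.betaIntegral (a:ℂ) (b:ℂ)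
      = ((∫ t in (0:ℝ)..1, t ^ (a-1) * (1 - t) ^ (b-1) : ℝ) : ℂ) := by
    rw [Complex.betaIntegral, ← intervalIntegral.integral_ofReal]
    apply intervalIntegral.integral_congr
    intro x hx
    rw [uIcc_of_le (by norm_num : (0:ℝ) ≤ 1)] at hx
    obtain ⟨hx0, hx1⟩ := hx
    show (x:ℂ) ^ ((a:ℂ) - 1) * (1 - (x:ℂ)) ^ ((b:ℂ) - 1)
        = ((x ^ (a - 1) * (1 - x) ^ (b - 1) : ℝ) : ℂ)
    rw [Complex.ofReal_mul, Complex.ofReal_cpow hx0, Complex.ofReal_cpow (by linarith : (0:ℝ) ≤ 1 - x)]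
    push_cast
    ring
  rw [h2, Complex.Gamma_ofReal, Complex.Gamma_ofReal,
    show ((a:ℂ) + (b:ℂ)) = ((a + b : ℝ) : ℂ) by push_cast; ring, Complex.Gamma_ofReal] at h
  have h3 : Real.Gamma a * Real.Gamma b
      = Real.Gamma (a+b) * ∫ t in (0:ℝ)..1, t ^ (a-1) * (1 - t) ^ (b-1) := by
    exact_mod_cast h
  have hne : Real.Gamma (a+b) ≠ 0 := (Real.Gamma_pos_of_pos (by linarith)).ne'
  field_simp
  linarith [h3]

lemma beta_eq' {s q : ℝ} (hs : -1 < s) (hq : -1 < q) :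
    ∫ t in (0:ℝ)..1, t ^ s * (1 - t) ^ q = Gamma (s+1) * Gamma (q+1) / Gamma (s+q+2) := by
  have := beta_eq (a := s+1) (b := q+1) (by linarith) (by linarith)
  rw [show s+1-1 = s by ring, show q+1-1 = q by ring, show s+1+(q+1) = s+q+2 by ring] at this
  exact this

section
variable {α b : ℝ}

set_option maxHeartbeats 3000000 in
lemma core (hα0 : 0 < α) (hα2 : α < 2) (hα1 : α ≠ 1)
    (hb0 : b ≠ 0) (hc0 : α - 1 - b ≠ 0) (hsign : 0 < b * (α - 1 - b)) :
    Bet (b+1) (-α) + Bet (α-b) (-α) + 1/α ≤ 0 := by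
  have hα1' : α - 1 ≠ 0 := sub_ne_zero.2 hα1
  obtain ⟨hb1, hb2, hc1, hc2⟩ : -1 < b ∧ b < 1 ∧ -1 < α - 1 - b ∧ α - 1 - b < 1 := by
    rcases mul_pos_iff.1 hsign with ⟨h1, h2⟩ | ⟨h1, h2⟩
    · exact ⟨by linarith, by linarith, by linarith, by linarith⟩
    · exact ⟨by linarith, by linarith, by linarith, by linarith⟩
  -- the singular integrand
  set g : ℝ → ℝ := fun t => (t ^ b - 1) * (1 - t ^ (α-1-b)) * (1-t) ^ (-1-α) with hg_def
  set W : ℝ → ℝ := fun t =>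
    ((b+1-α)*(b+2-α) * (t ^ b * (1-t) ^ (1-α)) + (-b)*(1-b) * (t ^ (α-1-b) * (1-t) ^ (1-α))
      - (1-α)*(2-α) * ((1-t) ^ (1-α))) / (α*(α-1)) with hW_def
  set F : ℝ → ℝ := fun t =>
    ((t ^ (b+1) + t ^ (α-b) - t - t ^ α) * (1-t) ^ (-α)
      - ((b+1-α) * t ^ (b+1) + (-b) * t ^ (α-b) - (1-α) * t) * (1-t) ^ (1-α) / (α-1)) / α
    with hF_def
  -- derivative identity on (0,1)
  have hFd : ∀ t ∈ Ioo (0:ℝ) 1, HasDerivAt F (g t - W t) t := by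
    intro t ht
    obtain ⟨ht0, ht1⟩ := ht
    have h1t : (0:ℝ) < 1 - t := by linarith
    have d1 : HasDerivAt (fun y : ℝ => y ^ (b+1)) ((b+1) * t ^ (b+1-1)) t :=
      Real.hasDerivAt_rpow_const (Or.inl ht0.ne')
    have d2 : HasDerivAt (fun y : ℝ => y ^ (α-b)) ((α-b) * t ^ (α-b-1)) t :=
      Real.hasDerivAt_rpow_const (Or.inl ht0.ne')
    have d3 : HasDerivAt (fun y : ℝ => y ^ α) (α * t ^ (α-1)) t :=
      Real.hasDerivAt_rpow_const (Or.inl ht0.ne')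
    have du : HasDerivAt (fun y : ℝ => (1-y) ^ (-α)) (-1 * -α * (1-t) ^ (-α-1)) t :=
      ((hasDerivAt_id t).const_sub 1).rpow_const (Or.inl h1t.ne')
    have dv : HasDerivAt (fun y : ℝ => (1-y) ^ (1-α)) (-1 * (1-α) * (1-t) ^ (1-α-1)) t :=
      ((hasDerivAt_id t).const_sub 1).rpow_const (Or.inl h1t.ne')
    have dφ : HasDerivAt (fun y : ℝ => y ^ (b+1) + y ^ (α-b) - y - y ^ α)
        ((b+1) * t ^ (b+1-1) + (α-b) * t ^ (α-b-1) - 1 - α * t ^ (α-1)) t :=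
      ((d1.add d2).sub (hasDerivAt_id t)).sub d3
    have dψ : HasDerivAt (fun y : ℝ => (b+1-α) * y ^ (b+1) + (-b) * y ^ (α-b) - (1-α) * y)
        ((b+1-α) * ((b+1) * t ^ (b+1-1)) + (-b) * ((α-b) * t ^ (α-b-1)) - (1-α) * 1) t :=
      ((d1.const_mul (b+1-α)).add (d2.const_mul (-b))).sub ((hasDerivAt_id t).const_mul (1-α))
    have hFd1 := ((dφ.mul du).sub ((dψ.mul dv).div_const (α-1))).div_const α
    have heq : g t - W t
        = (((b+1) * t ^ (b+1-1) + (α-b) * t ^ (α-b-1) - 1 - α * t ^ (α-1)) * (1-t) ^ (-α)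
            + (t ^ (b+1) + t ^ (α-b) - t - t ^ α) * (-1 * -α * (1-t) ^ (-α-1))
          - (((b+1-α) * ((b+1) * t ^ (b+1-1)) + (-b) * ((α-b) * t ^ (α-b-1)) - (1-α) * 1)
              * (1-t) ^ (1-α)
            + ((b+1-α) * t ^ (b+1) + (-b) * t ^ (α-b) - (1-α) * t)
              * (-1 * (1-α) * (1-t) ^ (1-α-1))) / (α-1)) / α := by
      have e1 : t ^ (b+1) = t ^ b * t := Real.rpow_add_one ht0.ne' b
      have e2 : t ^ (α-b) = t ^ (α-1-b) * t := by
        rw [← Real.rpow_add_one ht0.ne']; congr 1; ring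
      have e3 : t ^ α = t ^ b * t ^ (α-1-b) * t := by
        rw [← Real.rpow_add ht0, ← Real.rpow_add_one ht0.ne']; congr 1; ring
      have e4 : t ^ (α-1) = t ^ b * t ^ (α-1-b) := by
        rw [← Real.rpow_add ht0]; congr 1; ring
      have e5 : (1-t) ^ (-α) = (1-t) ^ (-1-α) * (1-t) := by
        rw [← Real.rpow_add_one h1t.ne']; congr 1; ring
      have e6 : (1-t) ^ (1-α) = (1-t) ^ (-1-α) * (1-t) * (1-t) := by
        rw [← Real.rpow_add_one h1t.ne', ← Real.rpow_add_one h1t.ne']; congr 1; ring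
      simp only [hg_def, hW_def]
      rw [show b+1-1 = b by ring, show α-b-1 = α-1-b by ring,
        show (-α-1:ℝ) = -1-α by ring, show (1-α-1:ℝ) = -α by ring]
      rw [e1, e2, e3, e4, e5, e6]
      field_simp
      ring
    rw [hF_def, heq]
    exact hFd1
  have h2α : (2:ℝ) - α ≠ 0 := by intro h; linarith
  have h1α : (1:ℝ) - α ≠ 0 := fun h => hα1 (by linarith)
  have hF1 : F 1 = 0 := by
    simp only [hF_def, sub_self, Real.one_rpow]
    rw [Real.zero_rpow (neg_ne_zero.2 hα0.ne'), Real.zero_rpow h1α]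
    ring
  have hF0 : F 0 = 0 := by
    simp only [hF_def]
    rw [Real.zero_rpow (by linarith : b + 1 ≠ 0), Real.zero_rpow (by linarith : α - b ≠ 0),
      Real.zero_rpow hα0.ne']
    norm_num
  have hFcont : ContinuousOn F (Icc 0 1) := by
    intro x hx
    rcases eq_or_lt_of_le hx.2 with hx1 | hx1
    · -- x = 1 : the delicate endpoint
      have key : ContinuousWithinAt F (Icc (0:ℝ) 1) 1 := by
        unfold ContinuousWithinAt
        rw [hF1]
        apply squeeze_zero_norm' (a := fun t : ℝ => ((16 + 9/|α-1|)/α) * (1-t) ^ (2-α))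
        · have hev : Ioi (1/2:ℝ) ∈ nhdsWithin (1:ℝ) (Icc (0:ℝ) 1) :=
            nhdsWithin_le_nhds (Ioi_mem_nhds (by norm_num))
          filter_upwards [hev, self_mem_nhdsWithin] with t htI htm
          have ht2 : (1:ℝ)/2 < t := htI
          rcases eq_or_lt_of_le htm.2 with h1 | hlt
          · rw [h1, hF1]
            simp [Real.zero_rpow h2α]
          · have ht0' : (0:ℝ) < t := by linarith
            have h1t : (0:ℝ) < 1 - t := by linarith
            have e1 : t ^ (b+1) = t ^ b * t := Real.rpow_add_one ht0'.ne' b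
            have e2 : t ^ (α-b) = t ^ (α-1-b) * t := by
              rw [← Real.rpow_add_one ht0'.ne']; congr 1; ring
            have e3 : t ^ α = t ^ b * t ^ (α-1-b) * t := by
              rw [← Real.rpow_add ht0', ← Real.rpow_add_one ht0'.ne']; congr 1; ring
            have hφeq : t ^ (b+1) + t ^ (α-b) - t - t ^ α
                = -t * ((t ^ b - 1) * (t ^ (α-1-b) - 1)) := by rw [e1, e2, e3]; ring
            have a1 : |t ^ b - 1| ≤ 4*(1-t) :=
              rpow_sub_one_bound' (by linarith) (by linarith) ht2.le htm.2
            have a2 : |t ^ (α-1-b) - 1| ≤ 4*(1-t) :=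
              rpow_sub_one_bound' (by linarith) (by linarith) ht2.le htm.2
            have a3 : |t ^ (b+1) - 1| ≤ 4*(1-t) :=
              rpow_sub_one_bound' (by linarith) (by linarith) ht2.le htm.2
            have a4 : |t ^ (α-b) - 1| ≤ 4*(1-t) :=
              rpow_sub_one_bound' (by linarith) (by linarith) ht2.le htm.2
            have hφb : |t ^ (b+1) + t ^ (α-b) - t - t ^ α| ≤ 16 * ((1-t)*(1-t)) := by
              rw [hφeq, abs_mul, abs_mul, abs_neg, abs_of_pos ht0']
              have hmm := mul_le_mul a1 a2 (abs_nonneg _) (by linarith)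
              nlinarith [abs_nonneg (t ^ b - 1), abs_nonneg (t ^ (α-1-b) - 1),
                mul_nonneg (abs_nonneg (t ^ b - 1)) (abs_nonneg (t ^ (α-1-b) - 1))]
            have hψb : |(b+1-α) * t ^ (b+1) + (-b) * t ^ (α-b) - (1-α) * t| ≤ 9 * (1-t) := by
              have hre : (b+1-α) * t ^ (b+1) + (-b) * t ^ (α-b) - (1-α) * t
                  = (b+1-α) * (t ^ (b+1) - 1) + (-b) * (t ^ (α-b) - 1) - (1-α) * (t-1) := by
                ring
              rw [hre]
              have k1 : |(b+1-α) * (t ^ (b+1) - 1)| ≤ 1 * (4*(1-t)) := by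
                rw [abs_mul]
                apply mul_le_mul _ a3 (abs_nonneg _) zero_le_one
                rw [abs_le]; constructor <;> linarith
              have k2 : |(-b) * (t ^ (α-b) - 1)| ≤ 1 * (4*(1-t)) := by
                rw [abs_mul]
                apply mul_le_mul _ a4 (abs_nonneg _) zero_le_one
                rw [abs_le]; constructor <;> linarith
              have k3 : |(1-α) * (t-1)| ≤ 1 * (1-t) := by
                rw [abs_mul]
                apply mul_le_mul _ (by rw [abs_of_nonpos (by linarith)]; linarith)
                  (abs_nonneg _) zero_le_one
                rw [abs_le]; constructor <;> linarith
              have tri : |(b+1-α) * (t ^ (b+1) - 1) + (-b) * (t ^ (α-b) - 1) - (1-α) * (t-1)|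
                  ≤ |(b+1-α) * (t ^ (b+1) - 1)| + |(-b) * (t ^ (α-b) - 1)| + |(1-α) * (t-1)| := by
                calc |(b+1-α) * (t ^ (b+1) - 1) + (-b) * (t ^ (α-b) - 1) - (1-α) * (t-1)|
                    ≤ |(b+1-α) * (t ^ (b+1) - 1) + (-b) * (t ^ (α-b) - 1)| + |(1-α) * (t-1)| := by
                      rw [sub_eq_add_neg]
                      simpa [abs_neg] using
                        abs_add_le ((b+1-α) * (t ^ (b+1) - 1) + (-b) * (t ^ (α-b) - 1))
                          (-((1-α) * (t-1)))
                  _ ≤ |(b+1-α) * (t ^ (b+1) - 1)| + |(-b) * (t ^ (α-b) - 1)| + |(1-α) * (t-1)| := by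
                      linarith [abs_add_le ((b+1-α) * (t ^ (b+1) - 1)) ((-b) * (t ^ (α-b) - 1))]
              linarith
            -- assemble the bound on F
            have hPnn : (0:ℝ) ≤ (1-t) ^ (-α) := Real.rpow_nonneg h1t.le _
            have hQnn : (0:ℝ) ≤ (1-t) ^ (1-α) := Real.rpow_nonneg h1t.le _
            have hRnn : (0:ℝ) ≤ (1-t) ^ (2-α) := Real.rpow_nonneg h1t.le _
            have hQ : (1-t) ^ (1-α) = (1-t) ^ (-α) * (1-t) := by
              rw [← Real.rpow_add_one h1t.ne']; congr 1; ring
            have hR : (1-t) ^ (2-α) = (1-t) ^ (1-α) * (1-t) := by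
              rw [← Real.rpow_add_one h1t.ne']; congr 1; ring
            have habs1 : |(t ^ (b+1) + t ^ (α-b) - t - t ^ α) * (1-t) ^ (-α)|
                ≤ 16 * (1-t) ^ (2-α) := by
              rw [abs_mul, abs_of_nonneg hPnn]
              calc |t ^ (b+1) + t ^ (α-b) - t - t ^ α| * (1-t) ^ (-α)
                  ≤ (16 * ((1-t)*(1-t))) * (1-t) ^ (-α) :=
                    mul_le_mul_of_nonneg_right hφb hPnn
                _ = 16 * (1-t) ^ (2-α) := by rw [hR, hQ]; ring
            have habs2 : |((b+1-α) * t ^ (b+1) + (-b) * t ^ (α-b) - (1-α) * t)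
                  * (1-t) ^ (1-α) / (α-1)|
                ≤ 9 * (1-t) ^ (2-α) / |α-1| := by
              rw [abs_div, abs_mul]
              rw [div_le_div_iff_of_pos_right (abs_pos.2 hα1')]
              calc |(b+1-α) * t ^ (b+1) + (-b) * t ^ (α-b) - (1-α) * t| * |(1-t) ^ (1-α)|
                  ≤ (9 * (1-t)) * (1-t) ^ (1-α) := by
                    rw [abs_of_nonneg hQnn]
                    exact mul_le_mul_of_nonneg_right hψb hQnn
                _ = 9 * (1-t) ^ (2-α) := by rw [hR]; ring
            have tri2 : ∀ x y : ℝ, |x - y| ≤ |x| + |y| := fun x y => by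
              rw [sub_eq_add_neg]; simpa [abs_neg] using abs_add_le x (-y)
            rw [Real.norm_eq_abs, hF_def]
            calc |((t ^ (b+1) + t ^ (α-b) - t - t ^ α) * (1-t) ^ (-α)
                  - ((b+1-α) * t ^ (b+1) + (-b) * t ^ (α-b) - (1-α) * t)
                      * (1-t) ^ (1-α) / (α-1)) / α|
                = |(t ^ (b+1) + t ^ (α-b) - t - t ^ α) * (1-t) ^ (-α)
                  - ((b+1-α) * t ^ (b+1) + (-b) * t ^ (α-b) - (1-α) * t)
                      * (1-t) ^ (1-α) / (α-1)| / α := by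
                  rw [abs_div, abs_of_pos hα0]
              _ ≤ (16 * (1-t) ^ (2-α) + 9 * (1-t) ^ (2-α) / |α-1|) / α := by
                  rw [div_le_div_iff_of_pos_right hα0]
                  exact le_trans (tri2 _ _) (by linarith)
              _ = ((16 + 9/|α-1|)/α) * (1-t) ^ (2-α) := by ring
        · have hc : ContinuousAt (fun t : ℝ => (1-t) ^ (2-α)) 1 := by
            apply ContinuousAt.comp (g := fun u : ℝ => u ^ (2-α))
              (Real.continuousAt_rpow_const _ _ (Or.inr (by linarith)))
            fun_prop
          have h0 : ((1:ℝ)-1) ^ (2-α) = (0:ℝ) := by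
            rw [sub_self]; exact Real.zero_rpow h2α
          have := (hc.tendsto.mono_left (nhdsWithin_le_nhds
            (s := Icc (0:ℝ) 1))).const_mul ((16 + 9/|α-1|)/α)
          rw [h0, mul_zero] at this
          exact this
      rw [hx1]
      exact key
    · rcases eq_or_lt_of_le hx.1 with hx0 | hx0
      · -- x = 0
        apply ContinuousAt.continuousWithinAt
        rw [← hx0]
        simp only [hF_def]
        apply ContinuousAt.div_const
        apply ContinuousAt.sub
        · apply ContinuousAt.mul
          · exact (((Real.continuousAt_rpow_const _ _ (Or.inr (by linarith))).add
              (Real.continuousAt_rpow_const _ _ (Or.inr (by linarith)))).sub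
              continuousAt_id).sub (Real.continuousAt_rpow_const _ _ (Or.inr hα0.le))
          · exact ContinuousAt.rpow_const (by fun_prop) (Or.inl (by norm_num))
        · apply ContinuousAt.div_const
          apply ContinuousAt.mul
          · exact (((Real.continuousAt_rpow_const _ _ (Or.inr (by linarith))).const_mul _).add
              ((Real.continuousAt_rpow_const _ _ (Or.inr (by linarith))).const_mul _)).sub
              (continuousAt_id.const_mul _)
          · exact ContinuousAt.rpow_const (by fun_prop) (Or.inl (by norm_num))
      · exact ((hFd x ⟨hx0, hx1⟩).continuousAt).continuousWithinAt
  -- integrability of g by domination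
  have hm : -1 < min b 0 + min (α-1-b) 0 := by
    rcases mul_pos_iff.1 hsign with ⟨h1, h2⟩ | ⟨h1, h2⟩
    · rw [min_eq_right h1.le, min_eq_right h2.le]; norm_num
    · rw [min_eq_left h1.le, min_eq_left h2.le]; linarith
  have hgcont : ContinuousOn g (Ioo 0 1) := by
    intro t ht
    apply ContinuousAt.continuousWithinAt
    have h1 : t ≠ 0 := ht.1.ne'
    have h2 : (1:ℝ) - t ≠ 0 := sub_ne_zero.2 (ne_of_gt ht.2)
    simp only [hg_def]
    exact (((Real.continuousAt_rpow_const _ _ (Or.inl h1)).sub continuousAt_const).mul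
      (continuousAt_const.sub (Real.continuousAt_rpow_const _ _ (Or.inl h1)))).mul
      (ContinuousAt.rpow_const (by fun_prop) (Or.inl h2))
  have hdom : IntegrableOn (fun t : ℝ => t ^ (min b 0 + min (α-1-b) 0) * (1-t) ^ (1-α))
      (Ioo (0:ℝ) 1) volume :=
    (intervalIntegrable_iff_integrableOn_Ioo_of_le (by norm_num)).1
      (intervalIntegrable_beta hm (by linarith))
  have hgint : IntervalIntegrable g volume 0 1 := by
    rw [intervalIntegrable_iff_integrableOn_Ioo_of_le (by norm_num)]
    apply hdom.mono' (hgcont.aestronglyMeasurable measurableSet_Ioo)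
    filter_upwards [ae_restrict_mem measurableSet_Ioo] with t ht
    obtain ⟨ht0, ht1⟩ := ht
    have h1t : (0:ℝ) < 1 - t := by linarith
    have b1 := rpow_sub_one_bound (e := b) hb1 hb2.le ht0 ht1
    have b2 := rpow_sub_one_bound (e := α-1-b) hc1 hc2.le ht0 ht1
    have hVnn : (0:ℝ) ≤ (1-t) ^ (-1-α) := Real.rpow_nonneg h1t.le _
    have hE : (1-t) ^ (-1-α) * (1-t) * (1-t) = (1-t) ^ (1-α) := by
      rw [← Real.rpow_add_one h1t.ne', ← Real.rpow_add_one h1t.ne']; congr 1; ring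
    have hE2 : t ^ (min b 0) * t ^ (min (α-1-b) 0) = t ^ (min b 0 + min (α-1-b) 0) :=
      (Real.rpow_add ht0 _ _).symm
    rw [Real.norm_eq_abs, hg_def]
    calc |(t ^ b - 1) * (1 - t ^ (α-1-b)) * (1-t) ^ (-1-α)|
        = |t ^ b - 1| * |t ^ (α-1-b) - 1| * (1-t) ^ (-1-α) := by
          rw [abs_mul, abs_mul, abs_of_nonneg hVnn, abs_sub_comm 1 (t ^ (α-1-b))]
      _ ≤ (t ^ (min b 0) * (1-t)) * (t ^ (min (α-1-b) 0) * (1-t)) * (1-t) ^ (-1-α) := by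
          apply mul_le_mul_of_nonneg_right _ hVnn
          exact mul_le_mul b1 b2 (abs_nonneg _) (by positivity)
      _ = (t ^ (min b 0) * t ^ (min (α-1-b) 0)) * ((1-t) ^ (-1-α) * (1-t) * (1-t)) := by ring
      _ = t ^ (min b 0 + min (α-1-b) 0) * (1-t) ^ (1-α) := by rw [hE2, hE]
  -- integrability of W
  have i1 : IntervalIntegrable (fun t : ℝ => t ^ b * (1-t) ^ (1-α)) volume 0 1 :=
    intervalIntegrable_beta hb1 (by linarith)
  have i2 : IntervalIntegrable (fun t : ℝ => t ^ (α-1-b) * (1-t) ^ (1-α)) volume 0 1 :=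
    intervalIntegrable_beta hc1 (by linarith)
  have i3 : IntervalIntegrable (fun t : ℝ => (1-t) ^ (1-α)) volume 0 1 := by
    have h := intervalIntegrable_beta (s := 0) (q := 1-α) (by norm_num) (by linarith)
    simpa [Real.rpow_zero] using h
  have hWint : IntervalIntegrable W volume 0 1 := by
    have h := (((i1.const_mul ((b+1-α)*(b+2-α))).add (i2.const_mul ((-b)*(1-b)))).sub
      (i3.const_mul ((1-α)*(2-α)))).div_const (α*(α-1))
    rw [hW_def]
    exact h
  -- FTC : ∫ g = ∫ W
  have hftc := intervalIntegral.integral_eq_sub_of_hasDerivAt_of_le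
    (by norm_num : (0:ℝ) ≤ 1) hFcont hFd (hgint.sub hWint)
  rw [intervalIntegral.integral_sub hgint hWint, hF1, hF0] at hftc
  have hgW : ∫ t in (0:ℝ)..1, g t = ∫ t in (0:ℝ)..1, W t := by linarith
  -- value of ∫ W
  have v1 : ∫ t in (0:ℝ)..1, t ^ b * (1-t) ^ (1-α)
      = Gamma (b+1) * Gamma (2-α) / Gamma (b+3-α) := by
    have h := beta_eq' hb1 (by linarith : (-1:ℝ) < 1-α)
    rw [show (1-α)+1 = 2-α by ring, show b+(1-α)+2 = b+3-α by ring] at h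
    exact h
  have v2 : ∫ t in (0:ℝ)..1, t ^ (α-1-b) * (1-t) ^ (1-α)
      = Gamma (α-b) * Gamma (2-α) / Gamma (2-b) := by
    have h := beta_eq' hc1 (by linarith : (-1:ℝ) < 1-α)
    rw [show (α-1-b)+1 = α-b by ring, show (1-α)+1 = 2-α by ring,
      show (α-1-b)+(1-α)+2 = 2-b by ring] at h
    exact h
  have v3 : ∫ t in (0:ℝ)..1, (1-t) ^ (1-α) = 1/(2-α) := by
    have h := intervalIntegral.integral_comp_sub_left (a := (0:ℝ)) (b := 1)
      (fun u : ℝ => u ^ (1-α)) 1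
    norm_num at h
    rw [h, integral_rpow (Or.inl (by linarith : (-1:ℝ) < 1-α))]
    rw [show (1:ℝ)-α+1 = 2-α by ring, Real.one_rpow, Real.zero_rpow h2α]
    norm_num
  have hIW : ∫ t in (0:ℝ)..1, W t
      = ((b+1-α)*(b+2-α) * (Gamma (b+1) * Gamma (2-α) / Gamma (b+3-α))
        + (-b)*(1-b) * (Gamma (α-b) * Gamma (2-α) / Gamma (2-b))
        - (1-α)*(2-α) * (1/(2-α))) / (α*(α-1)) := by
    rw [hW_def]
    simp only
    rw [intervalIntegral.integral_div,
      intervalIntegral.integral_sub ((i1.const_mul _).add (i2.const_mul _)) (i3.const_mul _),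
      intervalIntegral.integral_add (i1.const_mul _) (i2.const_mul _),
      intervalIntegral.integral_const_mul, intervalIntegral.integral_const_mul,
      intervalIntegral.integral_const_mul, v1, v2, v3]
  -- Gamma recurrences
  have hgamma : Bet (b+1) (-α) + Bet (α-b) (-α) + 1/α
      = ((b+1-α)*(b+2-α) * (Gamma (b+1) * Gamma (2-α) / Gamma (b+3-α))
        + (-b)*(1-b) * (Gamma (α-b) * Gamma (2-α) / Gamma (2-b))
        - (1-α)*(2-α) * (1/(2-α))) / (α*(α-1)) := by
    have r1 : Gamma (1-α) = -α * Gamma (-α) := by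
      rw [show (1:ℝ)-α = -α + 1 by ring, Real.Gamma_add_one (neg_ne_zero.2 hα0.ne')]
    have r2 : Gamma (2-α) = (1-α) * Gamma (1-α) := by
      rw [show (2:ℝ)-α = (1-α) + 1 by ring, Real.Gamma_add_one h1α]
    have r3 : Gamma (b+2-α) = (b+1-α) * Gamma (b+1-α) := by
      rw [show b+2-α = (b+1-α) + 1 by ring,
        Real.Gamma_add_one (by intro h; apply hc0; linarith)]
    have r4 : Gamma (b+3-α) = (b+2-α) * Gamma (b+2-α) := by
      rw [show b+3-α = (b+2-α) + 1 by ring,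
        Real.Gamma_add_one (by intro h; apply absurd hc2; intro _; linarith)]
    have r5 : Gamma (1-b) = -b * Gamma (-b) := by
      rw [show (1:ℝ)-b = -b+1 by ring, Real.Gamma_add_one (neg_ne_zero.2 hb0)]
    have r6 : Gamma (2-b) = (1-b) * Gamma (1-b) := by
      rw [show (2:ℝ)-b = (1-b)+1 by ring,
        Real.Gamma_add_one (by intro h; apply absurd hb2; intro _; linarith)]
    have n1 : Gamma (b+1-α) ≠ 0 :=
      gamma_ne_zero_of_gt_neg_one (by linarith) (by intro h; apply hc0; linarith)
    have n2 : Gamma (-b) ≠ 0 :=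
      gamma_ne_zero_of_gt_neg_one (by linarith) (neg_ne_zero.2 hb0)
    have hb1α : b+1-α ≠ 0 := by intro h; apply hc0; linarith
    have hb2α : b+2-α ≠ 0 := by intro h; apply absurd hc2; intro _; linarith
    have h1b : (1:ℝ)-b ≠ 0 := by intro h; apply absurd hb2; intro _; linarith
    have e1 : Bet (b+1) (-α)
        = (b+1-α)*(b+2-α) * (Gamma (b+1) * Gamma (2-α) / Gamma (b+3-α)) / (α*(α-1)) := by
      rw [Bet, show b+1 + -α = b+1-α by ring, r4, r3, r2, r1]
      field_simp
      ring
    have e2 : Bet (α-b) (-α)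
        = (-b)*(1-b) * (Gamma (α-b) * Gamma (2-α) / Gamma (2-b)) / (α*(α-1)) := by
      rw [Bet, show α-b + -α = -b by ring, r6, r5, r2, r1]
      field_simp
      ring
    have e3 : 1/α = -((1-α)*(2-α) * (1/(2-α))) / (α*(α-1)) := by
      field_simp
      ring
    rw [e1, e2, e3]
    ring
  -- sign of the integral
  have hgle : ∫ t in (0:ℝ)..1, g t ≤ 0 := by
    have hnn : ∀ u ∈ Icc (0:ℝ) 1, 0 ≤ -g u := by
      intro u hu
      have hgu : g u ≤ 0 := by
        rcases eq_or_lt_of_le hu.1 with h0 | h0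
        · rw [hg_def, ← h0]
          simp [Real.zero_rpow hb0, Real.zero_rpow hc0]
        · have hVnn : (0:ℝ) ≤ (1-u) ^ (-1-α) := Real.rpow_nonneg (by linarith [hu.2]) _
          rw [hg_def]
          simp only
          rcases mul_pos_iff.1 hsign with ⟨h1, h2⟩ | ⟨h1, h2⟩
          · have hA : u ^ b ≤ 1 := Real.rpow_le_one h0.le hu.2 h1.le
            have hB : u ^ (α-1-b) ≤ 1 := Real.rpow_le_one h0.le hu.2 h2.le
            exact mul_nonpos_iff.2 (Or.inr
              ⟨mul_nonpos_iff.2 (Or.inr ⟨by linarith, by linarith⟩), hVnn⟩)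
          · have hA : 1 ≤ u ^ b :=
              Real.one_le_rpow_of_pos_of_le_one_of_nonpos h0 hu.2 h1.le
            have hB : 1 ≤ u ^ (α-1-b) :=
              Real.one_le_rpow_of_pos_of_le_one_of_nonpos h0 hu.2 h2.le
            exact mul_nonpos_iff.2 (Or.inr
              ⟨mul_nonpos_iff.2 (Or.inl ⟨by linarith, by linarith⟩), hVnn⟩)
      linarith
    have h := intervalIntegral.integral_nonneg (μ := volume) (f := fun u => -g u)
      (by norm_num : (0:ℝ) ≤ 1) hnn
    rw [intervalIntegral.integral_neg] at h
    linarith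
  rw [hgamma, ← hIW, ← hgW]
  exact hgle



theorem kappa_nonneg (d : ℕ) (hd : 1 ≤ d) (α p : ℝ) (hα : α ∈ Set.Ioo (0:ℝ) 2)
    (hα1 : α ≠ 1) (hp : 1 < p) : 0 ≤ kappa d p α := by
  obtain ⟨hα0, hα2⟩ := hα
  have hp0 : (0:ℝ) < p := by linarith
  have hα1' : α - 1 ≠ 0 := sub_ne_zero.2 hα1
  set b := (α-1)/p with hb_def
  have hb0 : b ≠ 0 := div_ne_zero hα1' hp0.ne'
  have hkey : α - 1 - b = (α-1)*(p-1)/p := by rw [hb_def]; field_simp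
  have hc0 : α - 1 - b ≠ 0 := by
    rw [hkey]
    exact div_ne_zero (mul_ne_zero hα1' (by intro h; rw [sub_eq_zero] at h; linarith)) hp0.ne'
  have hsq : 0 < (α-1)^2 := lt_of_le_of_ne (sq_nonneg _) (Ne.symm (pow_ne_zero 2 hα1'))
  have hsign : 0 < b * (α - 1 - b) := by
    have h : b * (α - 1 - b) = (α-1)^2 * (p-1) / (p*p) := by
      rw [hkey, hb_def]; field_simp
    rw [h]
    apply div_pos (mul_pos hsq (by linarith)) (by positivity)
  have hS := core hα0 hα2 hα1 hb0 hc0 hsign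
  have hP : 0 < Real.pi ^ (((d:ℝ)-1)/2) * Real.Gamma ((1+α)/2) / Real.Gamma ((α+d)/2) := by
    apply div_pos
    · exact mul_pos (Real.rpow_pos_of_pos Real.pi_pos _)
        (Real.Gamma_pos_of_pos (by linarith))
    · apply Real.Gamma_pos_of_pos
      have h0d : (0:ℝ) ≤ d := Nat.cast_nonneg d
      linarith
  rw [kappa, ← hb_def]
  rw [neg_mul]
  exact neg_nonneg.2 (mul_nonpos_iff.2 (Or.inl ⟨hP.le, hS⟩))

end
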